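/- arXiv:2411.12085 — 8 statements merged into one kernel-verified Lean document; each statement's English description precedes it below -/
import Mathlib

section
/- Let M_1 ⊆ R^s × R^{t_1} and M_2 ⊆ R^s × R^{t_2} be finite sets such that proj_s(M_1) ∪ proj_s(M_2) is a collection of affinely independent points in R^s. Then a point (p^1, q^1, p^2, q^2) satisfies (p^i, q^i) ∈ conv(M_i) for i = 1,2 and p^1 = p^2 if and only if (p^1, q^1, p^2, q^2) belongs to the convex hull of { (p^1, q^1, p^2, q^2) : (p^i, q^i) ∈ M_i for i = 1,2, p^1 = p^2 }. -/
/-!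
Split a convex combination of `M₁` according to the shared coordinate: it becomes a convex
combination, with weights `V₁ x` indexed by the shared points `x`, of points `y₁ x` of the
convex hulls of the fibres of `M₁` over `x`. The shared coordinate of the combination is then
`∑ V₁ x • x`, so affine independence of the shared points forces the fibre weights `V₁` and `V₂`
of the two sides to agree. Hence `(z₁, z₂) = ∑ V₁ x • (y₁ x, y₂ x)`, and each `(y₁ x, y₂ x)`
lies in the convex hull of the product of the two fibres over `x`, all of whose points are coupled.
-/

open Finset

variable {𝕜 E F G ι : Type*} [Field 𝕜] [LinearOrder 𝕜]
  [AddCommGroup E] [Module 𝕜 E] [AddCommGroup F] [Module 𝕜 F] [AddCommGroup G] [Module 𝕜 G]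

lemma fst_sum_smul_of_mem_convexHull_fiber {M : Set (E × F)} {T : Finset E} {V : E → 𝕜}
    {y : E → E × F} (hy : ∀ x ∈ T, V x ≠ 0 → y x ∈ convexHull 𝕜 (M ∩ Prod.fst ⁻¹' {x})) :
    (∑ x ∈ T, V x • y x).1 = ∑ x ∈ T, V x • x := by
  rw [Prod.fst_sum]
  refine sum_congr rfl fun x hx => ?_
  by_cases h : V x = 0
  · simp [h]
  have hfiber : convexHull 𝕜 (M ∩ Prod.fst ⁻¹' {x}) ⊆ Prod.fst ⁻¹' {x} :=
    convexHull_min Set.inter_subset_right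
      ((convex_singleton x).linear_preimage (LinearMap.fst 𝕜 E F))
  rw [Prod.smul_fst, hfiber (hy x hx h)]

theorem convexHull_coupled_subset (M₁ : Set (E × F)) (M₂ : Set (E × G)) :
    convexHull 𝕜 {q : (E × F) × (E × G) | q.1 ∈ M₁ ∧ q.2 ∈ M₂ ∧ q.1.1 = q.2.1} ⊆
      {q | q.1 ∈ convexHull 𝕜 M₁ ∧ q.2 ∈ convexHull 𝕜 M₂ ∧ q.1.1 = q.2.1} := by
  refine convexHull_min
    (fun q ⟨h₁, h₂, h⟩ => ⟨subset_convexHull 𝕜 M₁ h₁, subset_convexHull 𝕜 M₂ h₂, h⟩) ?_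
  refine ((convex_convexHull 𝕜 M₁).linear_preimage (LinearMap.fst 𝕜 _ _)).inter
    (((convex_convexHull 𝕜 M₂).linear_preimage (LinearMap.snd 𝕜 _ _)).inter
      (LinearMap.eqLocus ((LinearMap.fst 𝕜 E F).comp (LinearMap.fst 𝕜 _ _))
        ((LinearMap.fst 𝕜 E G).comp (LinearMap.snd 𝕜 _ _))).convex)

variable [IsStrictOrderedRing 𝕜]

lemma Finset.sum_smul_centerMass {t : Finset ι} {w : ι → 𝕜} (z : ι → E)
    (hw₀ : ∀ i ∈ t, 0 ≤ w i) : (∑ i ∈ t, w i) • t.centerMass w z = ∑ i ∈ t, w i • z i := by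
  by_cases h : ∑ i ∈ t, w i = 0
  · have hw : ∀ i ∈ t, w i = 0 := (sum_eq_zero_iff_of_nonneg hw₀).1 h
    rw [h, zero_smul, sum_eq_zero fun i hi => by rw [hw i hi, zero_smul]]
  · rw [centerMass, smul_inv_smul₀ h]

lemma Convex.sum_mem_of_ne_zero {s : Set E} (hs : Convex 𝕜 s) {t : Finset ι} {w : ι → 𝕜}
    {z : ι → E} (h₀ : ∀ i ∈ t, 0 ≤ w i) (h₁ : ∑ i ∈ t, w i = 1)
    (hz : ∀ i ∈ t, w i ≠ 0 → z i ∈ s) : ∑ i ∈ t, w i • z i ∈ s := by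
  classical
  rw [← sum_filter_ne_zero] at h₁
  rw [← sum_filter_of_ne (p := fun i => w i ≠ 0) fun i _ h hw => h (by rw [hw, zero_smul])]
  exact hs.sum_mem (fun i hi => h₀ i (mem_filter.1 hi).1) h₁
    fun i hi => hz i (mem_filter.1 hi).1 (mem_filter.1 hi).2

theorem Set.Finite.exists_fiberwise_of_mem_convexHull {M : Set E} (hM : M.Finite) {g : E → ι}
    {T : Finset ι} (hT : ∀ a ∈ M, g a ∈ T) {z : E} (hz : z ∈ convexHull 𝕜 M) :
    ∃ (V : ι → 𝕜) (y : ι → E), (∀ i ∈ T, 0 ≤ V i) ∧ ∑ i ∈ T, V i = 1 ∧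
      (∀ i ∈ T, V i ≠ 0 → y i ∈ convexHull 𝕜 (M ∩ g ⁻¹' {i})) ∧ ∑ i ∈ T, V i • y i = z := by
  classical
  rw [← hM.coe_toFinset, mem_convexHull'] at hz
  obtain ⟨w, hw₀, hw₁, rfl⟩ := hz
  have hmaps : ∀ a ∈ hM.toFinset, g a ∈ T := fun a ha => hT a (hM.mem_toFinset.1 ha)
  let fiber (i : ι) : Finset E := {a ∈ hM.toFinset | g a = i}
  have hfiber₀ (i : ι) : ∀ a ∈ fiber i, 0 ≤ w a := fun a ha => hw₀ a (mem_filter.1 ha).1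
  refine ⟨fun i => ∑ a ∈ fiber i, w a, fun i => (fiber i).centerMass w id,
    fun i _ => sum_nonneg (hfiber₀ i), by rw [sum_fiberwise_of_maps_to hmaps, hw₁],
    fun i _ hi => ?_, ?_⟩
  · refine (fiber i).centerMass_mem_convexHull (hfiber₀ i)
      ((sum_nonneg (hfiber₀ i)).lt_of_ne' hi) fun a ha => ?_
    obtain ⟨haM, rfl⟩ := mem_filter.1 ha
    exact ⟨hM.mem_toFinset.1 haM, rfl⟩
  · simp_rw [sum_smul_centerMass _ (hfiber₀ _)]
    exact sum_fiberwise_of_maps_to hmaps _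

theorem mem_convexHull_coupled_of_affineIndependent {M₁ : Set (E × F)} {M₂ : Set (E × G)}
    (hM₁ : M₁.Finite) (hM₂ : M₂.Finite)
    (hindep : AffineIndependent 𝕜 ((↑) : ↥(Prod.fst '' M₁ ∪ Prod.fst '' M₂) → E))
    {z₁ : E × F} {z₂ : E × G} (hz₁ : z₁ ∈ convexHull 𝕜 M₁) (hz₂ : z₂ ∈ convexHull 𝕜 M₂)
    (hz : z₁.1 = z₂.1) :
    (z₁, z₂) ∈ convexHull 𝕜 {q : (E × F) × (E × G) | q.1 ∈ M₁ ∧ q.2 ∈ M₂ ∧ q.1.1 = q.2.1} := by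
  have hP : (Prod.fst '' M₁ ∪ Prod.fst '' M₂).Finite := (hM₁.image _).union (hM₂.image _)
  set T := hP.toFinset
  rw [← hP.coe_toFinset] at hindep
  obtain ⟨V₁, y₁, hV₁₀, hV₁, hy₁, rfl⟩ := hM₁.exists_fiberwise_of_mem_convexHull
    (fun a ha => hP.mem_toFinset.2 (Or.inl ⟨a, ha, rfl⟩)) hz₁
  obtain ⟨V₂, y₂, -, hV₂, hy₂, rfl⟩ := hM₂.exists_fiberwise_of_mem_convexHull
    (fun a ha => hP.mem_toFinset.2 (Or.inr ⟨a, ha, rfl⟩)) hz₂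
  have hV : ∀ x ∈ T, V₁ x = V₂ x := by
    refine hindep.eq_of_sum_eq_sum_subtype (by rw [hV₁, hV₂]) ?_
    rw [← fst_sum_smul_of_mem_convexHull_fiber hy₁, ← fst_sum_smul_of_mem_convexHull_fiber hy₂, hz]
  have hsum : (∑ x ∈ T, V₁ x • y₁ x, ∑ x ∈ T, V₂ x • y₂ x) = ∑ x ∈ T, V₁ x • (y₁ x, y₂ x) :=
    Prod.ext (by rw [Prod.fst_sum]; rfl)
      (by rw [Prod.snd_sum]; exact sum_congr rfl fun x hx => by rw [hV x hx]; rfl)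
  rw [hsum]
  refine (convex_convexHull 𝕜 _).sum_mem_of_ne_zero hV₁₀ hV₁ fun x hx hx₀ => ?_
  refine convexHull_mono ?_ (mk_mem_convexHull_prod (hy₁ x hx hx₀) (hy₂ x hx (hV x hx ▸ hx₀)))
  rintro ⟨a, b⟩ ⟨⟨ha, rfl⟩, hb, hb'⟩
  exact ⟨ha, hb, hb'.symm⟩

theorem mem_convexHull_coupled_iff {M₁ : Set (E × F)} {M₂ : Set (E × G)}
    (hM₁ : M₁.Finite) (hM₂ : M₂.Finite)
    (hindep : AffineIndependent 𝕜 ((↑) : ↥(Prod.fst '' M₁ ∪ Prod.fst '' M₂) → E))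
    (z : (E × F) × (E × G)) :
    (z.1 ∈ convexHull 𝕜 M₁ ∧ z.2 ∈ convexHull 𝕜 M₂ ∧ z.1.1 = z.2.1) ↔
      z ∈ convexHull 𝕜 {q : (E × F) × (E × G) | q.1 ∈ M₁ ∧ q.2 ∈ M₂ ∧ q.1.1 = q.2.1} :=
  ⟨fun ⟨hz₁, hz₂, hz⟩ => mem_convexHull_coupled_of_affineIndependent hM₁ hM₂ hindep hz₁ hz₂ hz,
    fun hz => convexHull_coupled_subset M₁ M₂ hz⟩

/-- Decomposition of coupled convex hull constraints under affine independence
of the shared coordinates. -/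
theorem stmt4 {s t1 t2 : ℕ}
    (M1 : Set ((Fin s → ℝ) × (Fin t1 → ℝ))) (M2 : Set ((Fin s → ℝ) × (Fin t2 → ℝ)))
    (hM1 : M1.Finite) (hM2 : M2.Finite)
    (hindep : AffineIndependent ℝ
      (fun q : ↥(Prod.fst '' M1 ∪ Prod.fst '' M2) => (q : Fin s → ℝ)))
    (z : ((Fin s → ℝ) × (Fin t1 → ℝ)) × ((Fin s → ℝ) × (Fin t2 → ℝ))) :
    (z.1 ∈ convexHull ℝ M1 ∧ z.2 ∈ convexHull ℝ M2 ∧ z.1.1 = z.2.1) ↔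
      z ∈ convexHull ℝ {q : ((Fin s → ℝ) × (Fin t1 → ℝ)) × ((Fin s → ℝ) × (Fin t2 → ℝ)) |
        q.1 ∈ M1 ∧ q.2 ∈ M2 ∧ q.1.1 = q.2.1} :=
  mem_convexHull_coupled_iff hM1 hM2 hindep z
end

section
/- Let X^{(1)}, X^{(2)} be finite subsets of {0,1}^n × R^{m_1} and {0,1}^n × R^{m_2} respectively, and let c^{(i)}, d^{(i)} be linear objectives. Consider the vertex-extended sets X_V^{(i)} = { (x, y, w(x)) : (x, y) ∈ X^{(i)} } where w(x) ∈ {0,1}^{2^n} is the vertex-indicator vector of x. Then the set { (x^1, y^1, w^1, x^2, y^2, w^2) : (x^i, y^i, w^i) ∈ conv(X_V^{(i)}) for i = 1,2, x^1 = x^2, w^1 = w^2 } equals the convex hull of { (x^1, y^1, w(x^1), x^2, y^2, w(x^2)) : (x^i, y^i) ∈ X^{(i)}, x^1 = x^2 }. Consequently, minimizing a linear function of (x, y) over the former set yields the same optimal value as over the latter (strong duality of the V-Lagrangian dual). -/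
/-!
On binary `x` the vertex vector `w(x)` is the unit vector `e_x`, so a point `(z₁, z₂)` of the
relaxation, written on each side as a convex combination `∑ aₖ pₖ`, `∑ bₗ qₗ` of lifted points,
has the same vertex marginal `λ = w` on both sides: `λ_v` is the total weight of the points
with vertex `v`. Coupling the two sides conditionally independently given the vertex, with weight
`aₖ bₗ / λ_v` on pairs sharing the vertex `v`, writes `(z₁, z₂)` as a convex combination of
pairs of lifted points with equal `w`, hence with equal `x`.
-/

open Finset

section Coupling

variable {ι κ κ' : Type*} [DecidableEq ι]
  (m : ι → ℝ) (a : κ → ℝ) (ℓ : κ → ι) (b : κ' → ℝ) (ℓ' : κ' → ι)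

noncomputable def condIndepCoupling (k : κ) (l : κ') : ℝ :=
  if ℓ k = ℓ' l then a k * b l / m (ℓ k) else 0

variable {m a ℓ b ℓ'}

lemma condIndepCoupling_comm (k : κ) (l : κ') :
    condIndepCoupling m a ℓ b ℓ' k l = condIndepCoupling m b ℓ' a ℓ l k := by
  by_cases h : ℓ k = ℓ' l
  · simp [condIndepCoupling, h, mul_comm]
  · simp [condIndepCoupling, h, Ne.symm h]

lemma condIndepCoupling_nonneg [Fintype κ] (ha : ∀ k, 0 ≤ a k) (hb : ∀ l, 0 ≤ b l)
    (hma : ∀ i, ∑ k with ℓ k = i, a k = m i) (k : κ) (l : κ') :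
    0 ≤ condIndepCoupling m a ℓ b ℓ' k l := by
  unfold condIndepCoupling
  split_ifs
  · exact div_nonneg (mul_nonneg (ha k) (hb l)) (hma (ℓ k) ▸ sum_nonneg fun k _ => ha k)
  · exact le_rfl

lemma sum_condIndepCoupling_right [Fintype κ] [Fintype κ'] (ha : ∀ k, 0 ≤ a k)
    (hma : ∀ i, ∑ k with ℓ k = i, a k = m i) (hmb : ∀ i, ∑ l with ℓ' l = i, b l = m i)
    (k : κ) : ∑ l, condIndepCoupling m a ℓ b ℓ' k l = a k := by
  have hfactor : ∑ l, condIndepCoupling m a ℓ b ℓ' k l =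
      a k / m (ℓ k) * ∑ l with ℓ' l = ℓ k, b l := by
    rw [mul_sum, sum_filter]
    refine sum_congr rfl fun l _ => ?_
    by_cases h : ℓ k = ℓ' l
    · simp [condIndepCoupling, h, mul_div_right_comm]
    · simp [condIndepCoupling, h, Ne.symm h]
  rw [hmb] at hfactor
  rcases eq_or_ne (m (ℓ k)) 0 with hm | hm
  -- `a k / 0 = 0`, but then `a k` lies in a fiber of mass zero and vanishes too
  · have hle : a k ≤ m (ℓ k) :=
      hma (ℓ k) ▸ single_le_sum (fun k _ => ha k) (mem_filter.2 ⟨mem_univ k, rfl⟩)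
    rw [hfactor, hm, mul_zero]
    exact le_antisymm (ha k) (hm ▸ hle)
  · rw [hfactor, div_mul_cancel₀ _ hm]

lemma sum_condIndepCoupling_left [Fintype κ] [Fintype κ'] (hb : ∀ l, 0 ≤ b l)
    (hma : ∀ i, ∑ k with ℓ k = i, a k = m i) (hmb : ∀ i, ∑ l with ℓ' l = i, b l = m i)
    (l : κ') : ∑ k, condIndepCoupling m a ℓ b ℓ' k l = b l := by
  simp_rw [condIndepCoupling_comm (a := a)]
  exact sum_condIndepCoupling_right hb hmb hma l

end Coupling

section Gluing

variable {ι κ E F : Type*} [DecidableEq ι] [Fintype κ]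
  [AddCommGroup E] [Module ℝ E] [AddCommGroup F] [Module ℝ F]

lemma sum_fiber_eq_map_sum_smul (f : E →ₗ[ℝ] ι → ℝ) {a : κ → ℝ} {p : κ → E} {ℓ : κ → ι}
    (hℓ : ∀ k, f (p k) = Pi.single (ℓ k) 1) (i : ι) :
    ∑ k with ℓ k = i, a k = f (∑ k, a k • p k) i := by
  simp [hℓ, Pi.single_apply, sum_filter, eq_comm]

theorem mk_mem_convexHull_of_map_eq {s : Set E} {t : Set F}
    (f : E →ₗ[ℝ] ι → ℝ) (g : F →ₗ[ℝ] ι → ℝ)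
    (hs : ∀ p ∈ s, ∃ i, f p = Pi.single i 1) (ht : ∀ q ∈ t, ∃ i, g q = Pi.single i 1)
    {x : E} {y : F} (hx : x ∈ convexHull ℝ s) (hy : y ∈ convexHull ℝ t) (hxy : f x = g y) :
    (x, y) ∈ convexHull ℝ {z : E × F | z.1 ∈ s ∧ z.2 ∈ t ∧ f z.1 = g z.2} := by
  obtain ⟨κ, _, a, p, ha0, ha1, hps, rfl⟩ := mem_convexHull_iff_exists_fintype.1 hx
  obtain ⟨κ', _, b, q, hb0, hb1, hqt, rfl⟩ := mem_convexHull_iff_exists_fintype.1 hy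
  choose ℓ hℓ using fun k => hs _ (hps k)
  choose ℓ' hℓ' using fun l => ht _ (hqt l)
  have hma i := sum_fiber_eq_map_sum_smul f (a := a) hℓ i
  have hmb i := (sum_fiber_eq_map_sum_smul g (a := b) hℓ' i).trans (congrFun hxy i).symm
  set μ : κ × κ' → ℝ := fun kl => condIndepCoupling (f (∑ k, a k • p k)) a ℓ b ℓ' kl.1 kl.2
  have hrow k : ∑ l, μ (k, l) = a k := sum_condIndepCoupling_right ha0 hma hmb k
  have hcol l : ∑ k, μ (k, l) = b l := sum_condIndepCoupling_left hb0 hma hmb l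
  have hglue : ∑ kl, μ kl • (p kl.1, q kl.2) = (∑ k, a k • p k, ∑ l, b l • q l) := by
    refine Prod.ext ?_ ?_
    · simp_rw [Prod.fst_sum, Prod.smul_mk, Fintype.sum_prod_type, ← sum_smul, hrow]
    · simp_rw [Prod.snd_sum, Prod.smul_mk, Fintype.sum_prod_type_right, ← sum_smul, hcol]
  rw [← hglue, ← finsum_eq_sum_of_fintype]
  refine (convex_convexHull ℝ _).finsum_mem (fun kl => condIndepCoupling_nonneg ha0 hb0 hma _ _)
    ?_ fun kl hkl => subset_convexHull ℝ _ ⟨hps _, hqt _, ?_⟩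
  · rw [finsum_eq_sum_of_fintype, Fintype.sum_prod_type]
    simp_rw [hrow, ha1]
  · have hlabel : ℓ kl.1 = ℓ' kl.2 := by
      by_contra h
      exact hkl (if_neg h)
    rw [hℓ, hℓ', hlabel]

end Gluing

section VertexLift

variable {ι : Type*}

def vertexWeight [Fintype ι] (x : ι → ℝ) (v : ι → Bool) : ℝ :=
  ∏ j, if v j then x j else 1 - x j

noncomputable def vertexOf (x : ι → ℝ) : ι → Bool := fun j => decide (x j = 1)

lemma vertexWeight_eq_single [Fintype ι] {x : ι → ℝ} (hx : ∀ j, x j = 0 ∨ x j = 1) :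
    vertexWeight x = Pi.single (vertexOf x) 1 := by
  funext v
  by_cases hv : v = vertexOf x
  · rw [hv, Pi.single_eq_same]
    refine prod_eq_one fun j _ => ?_
    rcases hx j with h | h <;> simp [vertexOf, h]
  · obtain ⟨j, hj⟩ := Function.ne_iff.1 hv
    rw [Pi.single_eq_of_ne hv]
    refine prod_eq_zero (mem_univ j) ?_
    rcases hx j with h | h <;> cases hvj : v j <;> simp_all [vertexOf]

lemma eq_of_vertexWeight_eq [Fintype ι] {x y : ι → ℝ} (hx : ∀ j, x j = 0 ∨ x j = 1)
    (hy : ∀ j, y j = 0 ∨ y j = 1) (h : vertexWeight x = vertexWeight y) : x = y := by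
  have hv : vertexOf x = vertexOf y := by
    rw [vertexWeight_eq_single hx, vertexWeight_eq_single hy] at h
    by_contra hne
    simpa [Pi.single_eq_of_ne hne] using congrFun h (vertexOf x)
  funext j
  have hj := congrFun hv j
  rcases hx j with h | h <;> rcases hy j with h' | h' <;> simp_all [vertexOf]

def vertexLift [Fintype ι] {Y : Type*} (X : Set ((ι → ℝ) × Y)) :
    Set ((ι → ℝ) × Y × ((ι → Bool) → ℝ)) :=
  {q | ∃ p ∈ X, q = (p.1, p.2, vertexWeight p.1)}

lemma exists_single_of_mem_vertexLift [Fintype ι] {Y : Type*} {X : Set ((ι → ℝ) × Y)}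
    (hb : ∀ p ∈ X, ∀ j, p.1 j = 0 ∨ p.1 j = 1) :
    ∀ q ∈ vertexLift X, ∃ v, q.2.2 = Pi.single v 1 := by
  rintro _ ⟨p, hp, rfl⟩
  exact ⟨_, vertexWeight_eq_single (hb p hp)⟩

end VertexLift

theorem coupledRelaxation_eq_convexHull {ι Y₁ Y₂ : Type*} [Fintype ι]
    [AddCommGroup Y₁] [Module ℝ Y₁] [AddCommGroup Y₂] [Module ℝ Y₂]
    {X₁ : Set ((ι → ℝ) × Y₁)} {X₂ : Set ((ι → ℝ) × Y₂)}
    (hb₁ : ∀ p ∈ X₁, ∀ j, p.1 j = 0 ∨ p.1 j = 1) (hb₂ : ∀ p ∈ X₂, ∀ j, p.1 j = 0 ∨ p.1 j = 1) :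
    {z : ((ι → ℝ) × Y₁ × ((ι → Bool) → ℝ)) × ((ι → ℝ) × Y₂ × ((ι → Bool) → ℝ)) |
        z.1 ∈ convexHull ℝ (vertexLift X₁) ∧ z.2 ∈ convexHull ℝ (vertexLift X₂) ∧
        z.1.1 = z.2.1 ∧ z.1.2.2 = z.2.2.2} =
      convexHull ℝ {z | z.1 ∈ vertexLift X₁ ∧ z.2 ∈ vertexLift X₂ ∧ z.1.1 = z.2.1} := by
  refine subset_antisymm ?_ (convexHull_min ?_ ?_)
  · rintro ⟨z₁, z₂⟩ ⟨h₁, h₂, -, hw⟩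
    refine convexHull_mono ?_ (mk_mem_convexHull_of_map_eq
      (LinearMap.snd ℝ Y₁ _ ∘ₗ LinearMap.snd ℝ (ι → ℝ) _)
      (LinearMap.snd ℝ Y₂ _ ∘ₗ LinearMap.snd ℝ (ι → ℝ) _)
      (exists_single_of_mem_vertexLift hb₁) (exists_single_of_mem_vertexLift hb₂) h₁ h₂ hw)
    rintro ⟨_, _⟩ ⟨⟨p, hp, rfl⟩, ⟨q, hq, rfl⟩, hpq⟩
    exact ⟨⟨p, hp, rfl⟩, ⟨q, hq, rfl⟩, eq_of_vertexWeight_eq (hb₁ p hp) (hb₂ q hq) hpq⟩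
  · rintro ⟨_, _⟩ ⟨⟨p, hp, rfl⟩, ⟨q, hq, rfl⟩, hpq⟩
    exact ⟨subset_convexHull ℝ _ ⟨p, hp, rfl⟩, subset_convexHull ℝ _ ⟨q, hq, rfl⟩, hpq,
      congrArg vertexWeight hpq⟩
  · rintro u ⟨hu₁, hu₂, hux, huw⟩ v ⟨hv₁, hv₂, hvx, hvw⟩ α β hα hβ hαβ
    exact ⟨convex_convexHull ℝ _ hu₁ hv₁ hα hβ hαβ, convex_convexHull ℝ _ hu₂ hv₂ hα hβ hαβ,
      by simp [hux, hvx], by simp [huw, hvw]⟩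

theorem stmt6_general {n m1 m2 : ℕ}
    (X1 : Set ((Fin n → ℝ) × (Fin m1 → ℝ))) (X2 : Set ((Fin n → ℝ) × (Fin m2 → ℝ)))
    (hb1 : ∀ p ∈ X1, ∀ j, p.1 j = 0 ∨ p.1 j = 1)
    (hb2 : ∀ p ∈ X2, ∀ j, p.1 j = 0 ∨ p.1 j = 1) :
    letI w : (Fin n → ℝ) → (Fin n → Bool) → ℝ :=
      fun x v => ∏ j, if v j then x j else 1 - x j
    letI XV1 : Set ((Fin n → ℝ) × (Fin m1 → ℝ) × ((Fin n → Bool) → ℝ)) :=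
      {q | ∃ p ∈ X1, q = (p.1, p.2, w p.1)}
    letI XV2 : Set ((Fin n → ℝ) × (Fin m2 → ℝ) × ((Fin n → Bool) → ℝ)) :=
      {q | ∃ p ∈ X2, q = (p.1, p.2, w p.1)}
    letI A : Set (((Fin n → ℝ) × (Fin m1 → ℝ) × ((Fin n → Bool) → ℝ)) ×
        ((Fin n → ℝ) × (Fin m2 → ℝ) × ((Fin n → Bool) → ℝ))) :=
      {z | z.1 ∈ convexHull ℝ XV1 ∧ z.2 ∈ convexHull ℝ XV2 ∧
        z.1.1 = z.2.1 ∧ z.1.2.2 = z.2.2.2}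
    letI B : Set (((Fin n → ℝ) × (Fin m1 → ℝ) × ((Fin n → Bool) → ℝ)) ×
        ((Fin n → ℝ) × (Fin m2 → ℝ) × ((Fin n → Bool) → ℝ))) :=
      convexHull ℝ {z | z.1 ∈ XV1 ∧ z.2 ∈ XV2 ∧ z.1.1 = z.2.1}
    A = B ∧
      ∀ c : (((Fin n → ℝ) × (Fin m1 → ℝ) × ((Fin n → Bool) → ℝ)) ×
          ((Fin n → ℝ) × (Fin m2 → ℝ) × ((Fin n → Bool) → ℝ))) →ₗ[ℝ] ℝ,
        sInf (c '' A) = sInf (c '' B) := by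
  have hAB := coupledRelaxation_eq_convexHull hb1 hb2
  exact ⟨hAB, fun c => congrArg (sInf <| c '' ·) hAB⟩

/-- Strong duality of the V-Lagrangian dual for the two-block problem: the
coupled relaxation with vertex variables equals the convex hull of the coupled
integral set, so linear minimization over both yields the same value. -/
theorem stmt6 {n m1 m2 : ℕ}
    (X1 : Set ((Fin n → ℝ) × (Fin m1 → ℝ))) (X2 : Set ((Fin n → ℝ) × (Fin m2 → ℝ)))
    (hX1 : X1.Finite) (hX2 : X2.Finite)
    (hb1 : ∀ p ∈ X1, ∀ j, p.1 j = 0 ∨ p.1 j = 1)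
    (hb2 : ∀ p ∈ X2, ∀ j, p.1 j = 0 ∨ p.1 j = 1) :
    letI w : (Fin n → ℝ) → (Fin n → Bool) → ℝ :=
      fun x v => ∏ j, if v j then x j else 1 - x j
    letI XV1 : Set ((Fin n → ℝ) × (Fin m1 → ℝ) × ((Fin n → Bool) → ℝ)) :=
      {q | ∃ p ∈ X1, q = (p.1, p.2, w p.1)}
    letI XV2 : Set ((Fin n → ℝ) × (Fin m2 → ℝ) × ((Fin n → Bool) → ℝ)) :=
      {q | ∃ p ∈ X2, q = (p.1, p.2, w p.1)}
    letI A : Set (((Fin n → ℝ) × (Fin m1 → ℝ) × ((Fin n → Bool) → ℝ)) ×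
        ((Fin n → ℝ) × (Fin m2 → ℝ) × ((Fin n → Bool) → ℝ))) :=
      {z | z.1 ∈ convexHull ℝ XV1 ∧ z.2 ∈ convexHull ℝ XV2 ∧
        z.1.1 = z.2.1 ∧ z.1.2.2 = z.2.2.2}
    letI B : Set (((Fin n → ℝ) × (Fin m1 → ℝ) × ((Fin n → Bool) → ℝ)) ×
        ((Fin n → ℝ) × (Fin m2 → ℝ) × ((Fin n → Bool) → ℝ))) :=
      convexHull ℝ {z | z.1 ∈ XV1 ∧ z.2 ∈ XV2 ∧ z.1.1 = z.2.1}
    A = B ∧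
      ∀ c : (((Fin n → ℝ) × (Fin m1 → ℝ) × ((Fin n → Bool) → ℝ)) ×
          ((Fin n → ℝ) × (Fin m2 → ℝ) × ((Fin n → Bool) → ℝ))) →ₗ[ℝ] ℝ,
        sInf (c '' A) = sInf (c '' B) :=
  stmt6_general X1 X2 hb1 hb2
end

section
/- Fix ε > 0 and n ≥ 3. Consider the function on pairs (v_1, v_2) ∈ ({0,1}^n)² given by g(v_1, v_2) = −ε⟨1, v_1⟩ + ε⟨1, v_2⟩. For any subset V ⊆ {0,1}^n with |V| ≤ 2^{n−2} − 1, there exist v_1, v_2 ∈ {0,1}^n \ V with v_1 ≥ v_2 componentwise and ‖v_1 − v_2‖_0 ≥ 2, and hence min over (v_1, v_2) ∈ ({0,1}^n \ V)² of g(v_1, v_2) ≤ −2ε. -/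
/-!
Proof idea: fix two coordinates `D = {0, 1}`. The `2 ^ (n - 2)` vectors `w` vanishing on `D`, together
with their raisings `w ⊔ 𝟙_D`, form `2 ^ (n - 2)` pairwise disjoint pairs; as `V` has fewer elements,
one pair misses `V`. Its two vectors are comparable, differ exactly on `D`, and have objective value
`-ε · |D| = -2ε`.
-/

open Finset

theorem exists_notMem_and_map_notMem_of_card_lt {α : Type*} {s V : Finset α} {f : α → α}
    (hf : Set.InjOn f s) (hfs : ∀ w ∈ s, f w ∉ s) (hV : #V < #s) :
    ∃ w ∈ s, w ∉ V ∧ f w ∉ V := by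
  classical
  by_contra! h
  have hmaps : Set.MapsTo (fun w => if w ∈ V then w else f w) s V := by
    intro w hw
    by_cases hwV : w ∈ V
    · simp [hwV]
    · simpa [hwV] using h w hw hwV
  have hinj : Set.InjOn (fun w => if w ∈ V then w else f w) s := by
    intro w hw w' hw' hww'
    by_cases hwV : w ∈ V <;> by_cases hw'V : w' ∈ V <;> simp only [hwV, hw'V, if_true, if_false] at hww'
    · exact hww'
    · exact absurd (hww' ▸ hw) (hfs w' hw')
    · exact absurd (hww' ▸ hw') (hfs w hw)
    · exact hf hw hw' hww'
  exact (card_le_card_of_injOn _ hmaps hinj).not_gt hV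

section RaiseOn

variable {ι : Type*} [DecidableEq ι] (D : Finset ι)

def raiseOn (w : ι → Bool) : ι → Bool := fun k => decide (k ∈ D) || w k

theorem raiseOn_eq_true {w : ι → Bool} {k : ι} (hk : w k = true) : raiseOn D w k = true := by
  simp [raiseOn, hk]

variable [Fintype ι]

def zeroOn : Finset (ι → Bool) :=
  Fintype.piFinset fun k => if k ∈ D then {false} else univ

variable {D}

theorem mem_zeroOn {w : ι → Bool} : w ∈ zeroOn D ↔ ∀ k ∈ D, w k = false := by
  simp only [zeroOn, Fintype.mem_piFinset]
  refine forall_congr' fun k => ?_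
  by_cases hk : k ∈ D <;> simp [hk]

variable (D)

theorem card_zeroOn : #(zeroOn D) = 2 ^ (Fintype.card ι - #D) := by
  rw [zeroOn, Fintype.card_piFinset, ← card_compl]
  simp [apply_ite card, prod_ite, filter_not, prod_const, compl_eq_univ_sdiff]

theorem raiseOn_injOn : Set.InjOn (raiseOn D) (zeroOn D) := by
  intro w hw w' hw' h
  funext k
  have hk := congrFun h k
  by_cases hkD : k ∈ D
  · rw [mem_zeroOn.1 hw k hkD, mem_zeroOn.1 hw' k hkD]
  · simpa [raiseOn, hkD] using hk

theorem raiseOn_notMem_zeroOn (hD : D.Nonempty) (w : ι → Bool) : raiseOn D w ∉ zeroOn D := by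
  obtain ⟨k, hk⟩ := hD
  rw [mem_zeroOn]
  exact fun h => absurd (h k hk) (by simp [raiseOn, hk])

variable {D}

theorem filter_raiseOn_ne {w : ι → Bool} (hw : w ∈ zeroOn D) :
    (univ.filter fun k => raiseOn D w k ≠ w k) = D := by
  ext k
  by_cases hk : k ∈ D <;> simp [raiseOn, hk, mem_zeroOn.1 hw k]

theorem sum_raiseOn_indicator {R : Type*} [AddCommMonoidWithOne R] {w : ι → Bool}
    (hw : w ∈ zeroOn D) :
    (∑ k, if raiseOn D w k then (1 : R) else 0) = (∑ k, if w k then (1 : R) else 0) + #D := by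
  have hterm : ∀ k, (if raiseOn D w k then (1 : R) else 0)
      = (if w k then (1 : R) else 0) + if k ∈ D then 1 else 0 := by
    intro k
    by_cases hk : k ∈ D <;> simp [raiseOn, hk, mem_zeroOn.1 hw k]
  simp only [hterm, sum_add_distrib, sum_boole, filter_mem_eq_inter, univ_inter]

end RaiseOn

theorem stmt11_general (n : ℕ) (hn : 3 ≤ n) (ε : ℝ)
    (V : Finset (Fin n → Bool)) (hV : V.card ≤ 2 ^ (n - 2) - 1) :
    (∃ v1 v2 : Fin n → Bool, v1 ∉ V ∧ v2 ∉ V ∧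
        (∀ j, v2 j = true → v1 j = true) ∧
        2 ≤ (Finset.univ.filter fun j => v1 j ≠ v2 j).card) ∧
      sInf {x : ℝ | ∃ v1 ∉ V, ∃ v2 ∉ V,
          x = -ε * (∑ j, if v1 j then (1 : ℝ) else 0)
            + ε * (∑ j, if v2 j then (1 : ℝ) else 0)}
        ≤ -2 * ε := by
  set D : Finset (Fin n) := {⟨0, by omega⟩, ⟨1, by omega⟩}
  have hD : #D = 2 := card_pair (by simp [Fin.ext_iff])
  have hVlt : #V < #(zeroOn D) := by
    rw [card_zeroOn, Fintype.card_fin, hD]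
    have := Nat.two_pow_pos (n - 2)
    omega
  obtain ⟨w, hw, hwV, hrV⟩ := exists_notMem_and_map_notMem_of_card_lt (raiseOn_injOn D)
    (fun w _ => raiseOn_notMem_zeroOn D (insert_nonempty _ _) w) hVlt
  refine ⟨⟨raiseOn D w, w, hrV, hwV, fun k => raiseOn_eq_true D, by rw [filter_raiseOn_ne hw, hD]⟩, ?_⟩
  refine csInf_le ?_ ⟨raiseOn D w, hrV, w, hwV, ?_⟩
  · refine ((Set.finite_range fun p : (Fin n → Bool) × (Fin n → Bool) =>
      -ε * (∑ j, if p.1 j then (1 : ℝ) else 0) + ε * (∑ j, if p.2 j then (1 : ℝ) else 0)).subset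
      ?_).bddBelow
    rintro x ⟨v1, -, v2, -, rfl⟩
    exact ⟨(v1, v2), rfl⟩
  · rw [sum_raiseOn_indicator hw, hD]
    push_cast
    ring

/-- If at most `2^(n-2) - 1` vertices are removed, there remain comparable
binary vectors differing in at least two coordinates, so the SDA lower bound is
at most `-2ε`. -/
theorem stmt11 (n : ℕ) (hn : 3 ≤ n) (ε : ℝ) (hε : 0 < ε)
    (V : Finset (Fin n → Bool)) (hV : V.card ≤ 2 ^ (n - 2) - 1) :
    (∃ v1 v2 : Fin n → Bool, v1 ∉ V ∧ v2 ∉ V ∧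
        (∀ j, v2 j = true → v1 j = true) ∧
        2 ≤ (Finset.univ.filter fun j => v1 j ≠ v2 j).card) ∧
      sInf {x : ℝ | ∃ v1 ∉ V, ∃ v2 ∉ V,
          x = -ε * (∑ j, if v1 j then (1 : ℝ) else 0)
            + ε * (∑ j, if v2 j then (1 : ℝ) else 0)}
        ≤ -2 * ε :=
  stmt11_general n hn ε V hV
end

section
/- Let X^{(1)} ⊆ R^{n} × R^{m_1} and X^{(2)} ⊆ R^{n} × R^{m_2} be finite sets, F^{(1)} : R^n → R affine, and F^{(2)} : R^n → R an arbitrary function, such that F^{(1)}(x) + F^{(2)}(x) ≥ 0 for all x with (x, y^1) ∈ X^{(1)} and (x, y^2) ∈ X^{(2)} for some y^1, y^2 (i.e., the constraint is valid whenever x^{(1)} = x^{(2)} is jointly feasible in x-coordinates). Define X_ex^{(i)} = { (x, y, F^{(i)}(x)) : (x, y) ∈ X^{(i)} }. Then for any points (x^i, y^i, w^i) ∈ conv(X_ex^{(i)}), i = 1, 2, with x^1 = x^2, one has w^1 + w^2 ≥ 0. In particular, adding the dualized redundant constraint w^1 + w^2 ≥ 0 does not change the Lagrangian dual bound. -/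
/-!
On the convex hull of the first extended set the last coordinate still equals `F¹(x)`, because
`w = F¹(x)` is an affine condition. On the convex hull of the second one, `w + F¹(x) ≥ 0` holds,
because it holds at every generator by validity and is again an affine (half-space) condition.
Adding the two at a common `x` gives `w¹ + w² ≥ 0`.
-/

section

variable {𝕜 E F : Type*} [Ring 𝕜] [PartialOrder 𝕜]
  [AddCommGroup E] [Module 𝕜 E] [AddCommGroup F] [Module 𝕜 F]

theorem AffineMap.eq_zero_of_mem_convexHull {φ : E →ᵃ[𝕜] F} {s : Set E}
    (hs : ∀ q ∈ s, φ q = 0) {p : E} (hp : p ∈ convexHull 𝕜 s) : φ p = 0 :=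
  convexHull_min hs ((convex_singleton 0).affine_preimage φ) hp

theorem AffineMap.nonneg_of_mem_convexHull [IsOrderedRing 𝕜] {φ : E →ᵃ[𝕜] 𝕜} {s : Set E}
    (hs : ∀ q ∈ s, 0 ≤ φ q) {p : E} (hp : p ∈ convexHull 𝕜 s) : 0 ≤ φ p :=
  convexHull_min hs ((convex_Ici 0).affine_preimage φ) hp

theorem snd_snd_eq_of_mem_convexHull_graph (f : E →ᵃ[𝕜] 𝕜) {X : Set (E × F)} {p : E × F × 𝕜}
    (hp : p ∈ convexHull 𝕜 {q : E × F × 𝕜 | ∃ xy ∈ X, q = (xy.1, xy.2, f xy.1)}) :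
    p.2.2 = f p.1 := by
  have h := (AffineMap.snd.comp AffineMap.snd - f.comp AffineMap.fst).eq_zero_of_mem_convexHull
    (by rintro _ ⟨xy, -, rfl⟩; simp) hp
  simpa [sub_eq_zero] using h

theorem add_snd_snd_nonneg_of_mem_convexHull_graph [IsOrderedRing 𝕜] (f : E →ᵃ[𝕜] 𝕜) (g : E → 𝕜)
    {X : Set (E × F)} (hvalid : ∀ xy ∈ X, 0 ≤ f xy.1 + g xy.1) {p : E × F × 𝕜}
    (hp : p ∈ convexHull 𝕜 {q : E × F × 𝕜 | ∃ xy ∈ X, q = (xy.1, xy.2, g xy.1)}) :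
    0 ≤ f p.1 + p.2.2 := by
  have h := (f.comp AffineMap.fst + AffineMap.snd.comp AffineMap.snd).nonneg_of_mem_convexHull
    (by rintro _ ⟨xy, hxy, rfl⟩; simpa using hvalid xy hxy) hp
  simpa using h

end

theorem stmt12_general {n m1 m2 : ℕ}
    (X1 : Set ((Fin n → ℝ) × (Fin m1 → ℝ))) (X2 : Set ((Fin n → ℝ) × (Fin m2 → ℝ)))
    (F1 : (Fin n → ℝ) →ᵃ[ℝ] ℝ) (F2 : (Fin n → ℝ) → ℝ)
    (hvalid : ∀ x : Fin n → ℝ, (∃ y2, (x, y2) ∈ X2) → 0 ≤ F1 x + F2 x)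
    (p1 : (Fin n → ℝ) × (Fin m1 → ℝ) × ℝ) (p2 : (Fin n → ℝ) × (Fin m2 → ℝ) × ℝ)
    (hp1 : p1 ∈ convexHull ℝ {q : (Fin n → ℝ) × (Fin m1 → ℝ) × ℝ |
      ∃ xy ∈ X1, q = (xy.1, xy.2, F1 xy.1)})
    (hp2 : p2 ∈ convexHull ℝ {q : (Fin n → ℝ) × (Fin m2 → ℝ) × ℝ |
      ∃ xy ∈ X2, q = (xy.1, xy.2, F2 xy.1)})
    (heq : p1.1 = p2.1) :
    0 ≤ p1.2.2 + p2.2.2 := by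
  have hw1 : p1.2.2 = F1 p2.1 := heq ▸ snd_snd_eq_of_mem_convexHull_graph F1 hp1
  have hw2 : 0 ≤ F1 p2.1 + p2.2.2 :=
    add_snd_snd_nonneg_of_mem_convexHull_graph F1 F2 (fun xy hxy => hvalid xy.1 ⟨xy.2, hxy⟩) hp2
  linarith

/-- Dualizing a redundant constraint `F¹(x¹) + F²(x²) ≥ 0` with `F¹` affine
does not cut off any point of the coupled convex hull relaxation: the
inequality `w¹ + w² ≥ 0` holds automatically. -/
theorem stmt12 {n m1 m2 : ℕ}
    (X1 : Set ((Fin n → ℝ) × (Fin m1 → ℝ))) (X2 : Set ((Fin n → ℝ) × (Fin m2 → ℝ)))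
    (hX1 : X1.Finite) (hX2 : X2.Finite)
    (F1 : (Fin n → ℝ) →ᵃ[ℝ] ℝ) (F2 : (Fin n → ℝ) → ℝ)
    (hvalid : ∀ x : Fin n → ℝ, (∃ y2, (x, y2) ∈ X2) → 0 ≤ F1 x + F2 x)
    (p1 : (Fin n → ℝ) × (Fin m1 → ℝ) × ℝ) (p2 : (Fin n → ℝ) × (Fin m2 → ℝ) × ℝ)
    (hp1 : p1 ∈ convexHull ℝ {q : (Fin n → ℝ) × (Fin m1 → ℝ) × ℝ |
      ∃ xy ∈ X1, q = (xy.1, xy.2, F1 xy.1)})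
    (hp2 : p2 ∈ convexHull ℝ {q : (Fin n → ℝ) × (Fin m2 → ℝ) × ℝ |
      ∃ xy ∈ X2, q = (xy.1, xy.2, F2 xy.1)})
    (heq : p1.1 = p2.1) :
    0 ≤ p1.2.2 + p2.2.2 :=
  stmt12_general X1 X2 F1 F2 hvalid p1 p2 hp1 hp2 heq
end

section
/- Let X^{(1)}, X^{(2)} be finite subsets of {0,1}^n, and for each i and each x ∈ X^{(i)} define the full monomial vector m(x) ∈ R^{2^n} by m(x)_S = ∏_{j∈S} x_j. Then the set { (x^1, m(x^1), x^2, m(x^2)) : x^i ∈ X^{(i)}, m(x^1) = m(x^2) } has the same convex hull as the set { (x^1, w^1, x^2, w^2) : (x^i, w^i) ∈ conv({(x, m(x)) : x ∈ X^{(i)}}), w^1 = w^2 }; in particular both project in the x-coordinates to conv({ (x, x) : x ∈ X^{(1)} ∩ X^{(2)} }). -/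
/-! On the cube `{0,1}ⁿ` the indicator of a point `z`, `∏_{z_j = 1} x_j ∏_{z_j = 0} (1 - x_j)`, is
affine in each coordinate, hence a linear functional of the monomial vector `m(x)`. So the vectors
`m(x)`, and with them the lifted points `(x, m(x))`, of the cube are linearly and hence affinely
independent: they are the vertices of a simplex, whose faces over `X¹` and over `X²` meet exactly in
the face over `X¹ ∩ X²`. Since `x_j = m(x)_{j}`, a point of such a face is determined by its
`w`-part, so the coupling `w¹ = w²` forces both blocks to be the same point, and the coupled
relaxation is the diagonal copy of the face over `X¹ ∩ X²`. -/

open Finset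

lemma Set.setOf_exists_mem_eq_image {α β : Type*} (f : α → β) (s : Set α) :
    {b | ∃ a ∈ s, b = f a} = f '' s :=
  Set.ext fun _ => exists_congr fun _ => and_congr_right' eq_comm

theorem AffineIndependent.convexHull_inter_of_subset {𝕜 E : Type*} [Field 𝕜] [LinearOrder 𝕜]
    [IsStrictOrderedRing 𝕜] [AddCommGroup E] [Module 𝕜 E] {s t₁ t₂ : Set E}
    (hs : AffineIndependent 𝕜 ((↑) : s → E)) (h₁ : t₁ ⊆ s) (h₂ : t₂ ⊆ s) :
    convexHull 𝕜 (t₁ ∩ t₂) = convexHull 𝕜 t₁ ∩ convexHull 𝕜 t₂ := by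
  classical
  refine (Set.subset_inter (convexHull_mono Set.inter_subset_left)
    (convexHull_mono Set.inter_subset_right)).antisymm ?_
  rintro x ⟨hx₁, hx₂⟩
  rw [convexHull_eq_union_convexHull_finite_subsets, Set.mem_iUnion₂] at hx₁ hx₂
  obtain ⟨u₁, hu₁, hxu₁⟩ := hx₁
  obtain ⟨u₂, hu₂, hxu₂⟩ := hx₂
  have hu : AffineIndependent 𝕜 ((↑) : ↑(u₁ ∪ u₂) → E) :=
    hs.mono (by rw [coe_union]; exact Set.union_subset (hu₁.trans h₁) (hu₂.trans h₂))
  exact convexHull_mono (Set.inter_subset_inter hu₁ hu₂)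
    (hu.convexHull_inter'.ge ⟨hxu₁, hxu₂⟩)

def binaryCube (ι R : Type*) [Zero R] [One R] : Set (ι → R) := {x | ∀ j, x j = 0 ∨ x j = 1}

section MonomialVec

variable {ι R : Type*} [CommMonoid R]

def monomialVec (x : ι → R) (S : Finset ι) : R := ∏ j ∈ S, x j

def monomialLift (x : ι → R) : (ι → R) × (Finset ι → R) := (x, monomialVec x)

@[simp]
lemma monomialVec_singleton (x : ι → R) (j : ι) : monomialVec x {j} = x j := prod_singleton _ _

lemma monomialVec_injective : Function.Injective (monomialVec : (ι → R) → Finset ι → R) :=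
  fun _ _ h => funext fun j => by simpa using congrFun h {j}

lemma monomialLift_injective : Function.Injective (monomialLift : (ι → R) → _) :=
  fun _ _ h => congrArg Prod.fst h

lemma setOf_monomialVec_eq_eq_image_inter {X₁ X₂ : Set (ι → R)} :
    {p | ∃ x₁ ∈ X₁, ∃ x₂ ∈ X₂, monomialVec x₁ = monomialVec x₂ ∧
      p = (monomialLift x₁, monomialLift x₂)} =
      (fun x => (monomialLift x, monomialLift x)) '' (X₁ ∩ X₂) := by
  ext p
  constructor
  · rintro ⟨x₁, hx₁, x₂, hx₂, hm, rfl⟩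
    obtain rfl := monomialVec_injective hm
    exact ⟨x₁, ⟨hx₁, hx₂⟩, rfl⟩
  · rintro ⟨x, ⟨hx₁, hx₂⟩, rfl⟩
    exact ⟨x, hx₁, x, hx₂, rfl, rfl⟩

end MonomialVec

lemma fst_eq_of_mem_convexHull_image_monomialLift {ι R : Type*} [CommRing R] [PartialOrder R]
    {X : Set (ι → R)} {q : (ι → R) × (Finset ι → R)}
    (hq : q ∈ convexHull R (monomialLift '' X)) :
    q.1 = fun j => q.2 {j} := by
  refine convexHull_min (t := {q | q.1 = fun j => q.2 {j}}) ?_ ?_ hq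
  · rintro _ ⟨x, -, rfl⟩
    ext j
    simp [monomialLift]
  · intro p hp p' hp' a b _ _ _
    simp only [Set.mem_ofPred_eq] at hp hp' ⊢
    ext j
    simp [hp, hp']

section LinearIndependence

variable {ι R : Type*} [CommRing R] [Fintype ι]

lemma prod_add_mul_eq_sum_monomialVec [DecidableEq ι] (a b x : ι → R) :
    ∏ j, (a j + b j * x j) = ∑ T, ((∏ j ∈ T, b j) * ∏ j ∈ Tᶜ, a j) * monomialVec x T := by
  simp_rw [add_comm (a _), prod_add, powerset_univ, ← compl_eq_univ_sdiff, prod_mul_distrib,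
    monomialVec]
  exact sum_congr rfl fun T _ => by ring

open scoped Classical in
lemma prod_ite_eq_ite_of_mem_binaryCube {x z : ι → R} (hx : x ∈ binaryCube ι R)
    (hz : z ∈ binaryCube ι R) :
    ∏ j, (if z j = 1 then x j else 1 - x j) = if x = z then 1 else 0 := by
  have hfactor : ∀ j, (if z j = 1 then x j else 1 - x j) = if x j = z j then 1 else 0 := by
    intro j
    rcases hx j with h | h <;> rcases hz j with h' | h' <;> simp [h, h', @eq_comm R 1 0]
  simp_rw [hfactor, prod_boole, mem_univ, true_imp_iff, funext_iff]

open scoped Classical in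
lemma exists_linearMap_monomialVec_eq_ite {z : ι → R} (hz : z ∈ binaryCube ι R) :
    ∃ φ : (Finset ι → R) →ₗ[R] R,
      ∀ x ∈ binaryCube ι R, φ (monomialVec x) = if x = z then 1 else 0 := by
  let a : ι → R := fun j => if z j = 1 then 0 else 1
  let b : ι → R := fun j => if z j = 1 then 1 else -1
  refine ⟨∑ T, ((∏ j ∈ T, b j) * ∏ j ∈ Tᶜ, a j) • LinearMap.proj T, fun x hx => ?_⟩
  have haffine : ∀ j, (if z j = 1 then x j else 1 - x j) = a j + b j * x j := by
    intro j
    simp only [a, b]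
    split_ifs <;> ring
  rw [← prod_ite_eq_ite_of_mem_binaryCube hx hz, prod_congr rfl fun j _ => haffine j,
    prod_add_mul_eq_sum_monomialVec]
  simp

theorem linearIndepOn_monomialVec : LinearIndepOn R monomialVec (binaryCube ι R) := by
  rw [LinearIndepOn, linearIndependent_iff']
  intro s g hg i hi
  obtain ⟨φ, hφ⟩ := exists_linearMap_monomialVec_eq_ite i.2
  have hφg := congrArg φ hg
  simp only [map_sum, map_smul, hφ _ (Subtype.prop _), smul_eq_mul, mul_ite, mul_one, mul_zero,
    map_zero] at hφg
  rwa [sum_eq_single_of_mem i hi fun j _ hji => if_neg (Subtype.coe_injective.ne hji),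
    if_pos rfl] at hφg

theorem linearIndepOn_monomialLift : LinearIndepOn R monomialLift (binaryCube ι R) :=
  linearIndepOn_monomialVec.of_comp (LinearMap.snd R _ _)

end LinearIndependence

section Coupling

variable {𝕜 ι : Type*} [Field 𝕜] [LinearOrder 𝕜] [IsStrictOrderedRing 𝕜] [Fintype ι]
  {X₁ X₂ : Set (ι → 𝕜)}

theorem convexHull_image_monomialLift_inter (h₁ : X₁ ⊆ binaryCube ι 𝕜)
    (h₂ : X₂ ⊆ binaryCube ι 𝕜) :
    convexHull 𝕜 (monomialLift '' (X₁ ∩ X₂)) =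
      convexHull 𝕜 (monomialLift '' X₁) ∩ convexHull 𝕜 (monomialLift '' X₂) := by
  rw [Set.image_inter monomialLift_injective]
  have hs : AffineIndependent 𝕜
      ((↑) : (monomialLift '' binaryCube ι 𝕜) → (ι → 𝕜) × (Finset ι → 𝕜)) :=
    (linearIndepOn_monomialLift (R := 𝕜)).id_image.linearIndependent.affineIndependent
  exact hs.convexHull_inter_of_subset (Set.image_mono h₁) (Set.image_mono h₂)

theorem setOf_mem_convexHull_image_monomialLift_eq (h₁ : X₁ ⊆ binaryCube ι 𝕜)
    (h₂ : X₂ ⊆ binaryCube ι 𝕜) :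
    {p | p.1 ∈ convexHull 𝕜 (monomialLift '' X₁) ∧ p.2 ∈ convexHull 𝕜 (monomialLift '' X₂) ∧
      p.1.2 = p.2.2} = convexHull 𝕜 ((fun x => (monomialLift x, monomialLift x)) '' (X₁ ∩ X₂)) := by
  have hdiag : IsLinearMap 𝕜 fun q : (ι → 𝕜) × (Finset ι → 𝕜) => (q, q) :=
    ⟨fun _ _ => rfl, fun _ _ => rfl⟩
  rw [← Set.image_image (fun q => (q, q)), ← hdiag.image_convexHull,
    convexHull_image_monomialLift_inter h₁ h₂]
  ext p
  constructor
  · rintro ⟨hp₁, hp₂, hsnd⟩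
    have hp : p.1 = p.2 := Prod.ext (by
      rw [fst_eq_of_mem_convexHull_image_monomialLift hp₁,
        fst_eq_of_mem_convexHull_image_monomialLift hp₂, hsnd]) hsnd
    exact ⟨p.1, ⟨hp₁, hp ▸ hp₂⟩, Prod.ext rfl hp⟩
  · rintro ⟨q, ⟨hq₁, hq₂⟩, rfl⟩
    exact ⟨hq₁, hq₂, rfl⟩

end Coupling

theorem stmt15_general {n : ℕ} (X1 X2 : Set (Fin n → ℝ))
    (hb1 : ∀ x ∈ X1, ∀ j, x j = 0 ∨ x j = 1)
    (hb2 : ∀ x ∈ X2, ∀ j, x j = 0 ∨ x j = 1) :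
    letI m : (Fin n → ℝ) → (Finset (Fin n) → ℝ) := fun x S => ∏ j ∈ S, x j
    letI A : Set (((Fin n → ℝ) × (Finset (Fin n) → ℝ)) ×
        ((Fin n → ℝ) × (Finset (Fin n) → ℝ))) :=
      {p | ∃ x1 ∈ X1, ∃ x2 ∈ X2, m x1 = m x2 ∧ p = ((x1, m x1), (x2, m x2))}
    letI B : Set (((Fin n → ℝ) × (Finset (Fin n) → ℝ)) ×
        ((Fin n → ℝ) × (Finset (Fin n) → ℝ))) :=
      {p | p.1 ∈ convexHull ℝ {q | ∃ x ∈ X1, q = (x, m x)} ∧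
           p.2 ∈ convexHull ℝ {q | ∃ x ∈ X2, q = (x, m x)} ∧ p.1.2 = p.2.2}
    convexHull ℝ A = convexHull ℝ B ∧
      (fun p : ((Fin n → ℝ) × (Finset (Fin n) → ℝ)) ×
          ((Fin n → ℝ) × (Finset (Fin n) → ℝ)) => (p.1.1, p.2.1)) '' B
        = convexHull ℝ {q : (Fin n → ℝ) × (Fin n → ℝ) | ∃ x ∈ X1 ∩ X2, q = (x, x)} := by
  have hlift (X : Set (Fin n → ℝ)) :
      {q | ∃ x ∈ X, q = (x, fun S => ∏ j ∈ S, x j)} = monomialLift '' X :=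
    Set.setOf_exists_mem_eq_image monomialLift X
  have hA : {p | ∃ x1 ∈ X1, ∃ x2 ∈ X2, (fun S => ∏ j ∈ S, x1 j) = (fun S => ∏ j ∈ S, x2 j) ∧
      p = ((x1, fun S => ∏ j ∈ S, x1 j), (x2, fun S => ∏ j ∈ S, x2 j))} =
      (fun x => (monomialLift x, monomialLift x)) '' (X1 ∩ X2) :=
    setOf_monomialVec_eq_eq_image_inter
  have hproj : IsLinearMap ℝ fun p : ((Fin n → ℝ) × (Finset (Fin n) → ℝ)) ×
      ((Fin n → ℝ) × (Finset (Fin n) → ℝ)) => (p.1.1, p.2.1) :=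
    ⟨fun _ _ => rfl, fun _ _ => rfl⟩
  beta_reduce
  rw [hlift, hlift, hA, setOf_mem_convexHull_image_monomialLift_eq hb1 hb2,
    (convex_convexHull ℝ _).convexHull_eq, hproj.image_convexHull, Set.image_image,
    Set.setOf_exists_mem_eq_image]
  exact ⟨rfl, rfl⟩

/-- Strong duality of the full monomial (M-)Lagrangian dual in the two-block
case: the coupled relaxation with all monomial variables has the same convex
hull as the coupled integral set, and projects in the `x`-coordinates onto
`conv {(x, x) : x ∈ X₁ ∩ X₂}`. -/
theorem stmt15 {n : ℕ} (X1 X2 : Set (Fin n → ℝ))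
    (hX1 : X1.Finite) (hX2 : X2.Finite)
    (hb1 : ∀ x ∈ X1, ∀ j, x j = 0 ∨ x j = 1)
    (hb2 : ∀ x ∈ X2, ∀ j, x j = 0 ∨ x j = 1) :
    letI m : (Fin n → ℝ) → (Finset (Fin n) → ℝ) := fun x S => ∏ j ∈ S, x j
    letI A : Set (((Fin n → ℝ) × (Finset (Fin n) → ℝ)) ×
        ((Fin n → ℝ) × (Finset (Fin n) → ℝ))) :=
      {p | ∃ x1 ∈ X1, ∃ x2 ∈ X2, m x1 = m x2 ∧ p = ((x1, m x1), (x2, m x2))}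
    letI B : Set (((Fin n → ℝ) × (Finset (Fin n) → ℝ)) ×
        ((Fin n → ℝ) × (Finset (Fin n) → ℝ))) :=
      {p | p.1 ∈ convexHull ℝ {q | ∃ x ∈ X1, q = (x, m x)} ∧
           p.2 ∈ convexHull ℝ {q | ∃ x ∈ X2, q = (x, m x)} ∧ p.1.2 = p.2.2}
    convexHull ℝ A = convexHull ℝ B ∧
      (fun p : ((Fin n → ℝ) × (Finset (Fin n) → ℝ)) ×
          ((Fin n → ℝ) × (Finset (Fin n) → ℝ)) => (p.1.1, p.2.1)) '' B
        = convexHull ℝ {q : (Fin n → ℝ) × (Fin n → ℝ) | ∃ x ∈ X1 ∩ X2, q = (x, x)} :=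
  stmt15_general X1 X2 hb1 hb2
end

section
/- For a down-closed family U ⊆ 2^{[n]} with singletons of a fixed set U₀ ⊆ [n] (i.e., U = 2^{U₀}), and finite A^1, A^2 ⊆ {0,1}^n, the set { (x^1, w^1, x^2, w^2) : (x^i, w^i) ∈ conv(X_M^{(i)}), w^1_S = w^2_S ∀ S ⊆ U₀ } equals conv({ (x^1, m_{U₀}(x^1), x^2, m_{U₀}(x^2)) : x^i ∈ A^i, x^1_j = x^2_j ∀ j ∈ U₀ }), where X_M^{(i)} = { (x, m_{U₀}(x)) : x ∈ A^i } and m_{U₀}(x) = (∏_{j∈S} x_j)_{S ⊆ U₀}. In particular the projection to (x^1, x^2) equals conv({ (x^1, x^2) : x^i ∈ A^i, x^1_j = x^2_j ∀ j ∈ U₀ }). -/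
/-!
The monomial coordinates of a convex combination `∑ λₓ • (x, m x)` are its moments
`∑ λₓ ∏_{j ∈ S} x_j`, `S ⊆ U₀`. For a 0/1 pattern `z` on `U₀`, the polynomial
`∏_{j ∈ U₀} ((2 z_j - 1) x_j + 1 - z_j)` is the indicator of `{x | x = z on U₀}` on 0/1 points,
and it is multilinear, hence a combination of these monomials: the moments determine the mass
that `λ` puts on each pattern. So if the two blocks have equal monomial coordinates, their
pattern marginals coincide, and gluing the two weightings conditionally independently given the
pattern writes the point as a convex combination of coupled points
`((x¹, m x¹), (x², m x²))` with `x¹ = x²` on `U₀`.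
-/

open Finset

section Moments

variable {ι R : Type*} [CommRing R]

def patternIndicator (U : Finset ι) (z x : ι → R) : R :=
  ∏ j ∈ U, ((2 * z j - 1) * x j + (1 - z j))

theorem patternIndicator_eq_ite [DecidableEq R] {U : Finset ι} {x z : ι → R}
    (hx : ∀ j ∈ U, x j = 0 ∨ x j = 1) (hz : ∀ j ∈ U, z j = 0 ∨ z j = 1) :
    patternIndicator U z x = if ∀ j ∈ U, x j = z j then 1 else 0 := by
  rw [patternIndicator, ← prod_boole]
  refine prod_congr rfl fun j hj => ?_
  rcases hx j hj with h | h <;> rcases hz j hj with h' | h' <;> norm_num [h, h', eq_comm]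

theorem sum_mul_patternIndicator_eq_sum_powerset [DecidableEq ι] (U : Finset ι)
    (s : Finset (ι → R)) (w : (ι → R) → R) (z : ι → R) :
    ∑ x ∈ s, w x * patternIndicator U z x =
      ∑ S ∈ U.powerset, (∏ j ∈ S, (2 * z j - 1)) * (∏ j ∈ U \ S, (1 - z j)) *
        ∑ x ∈ s, w x * ∏ j ∈ S, x j := by
  simp_rw [patternIndicator, prod_add, mul_sum, prod_mul_distrib]
  rw [sum_comm]
  exact sum_congr rfl fun S _ => sum_congr rfl fun x _ => by ring

theorem sum_filter_restrict_eq_of_moments_eq [DecidableEq ι] [DecidableEq R] {U : Finset ι}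
    {s t : Finset (ι → R)} (hs : ∀ x ∈ s, ∀ j ∈ U, x j = 0 ∨ x j = 1)
    (ht : ∀ y ∈ t, ∀ j ∈ U, y j = 0 ∨ y j = 1) {v w : (ι → R) → R}
    (hvw : ∀ S ⊆ U, ∑ x ∈ s, v x * ∏ j ∈ S, x j = ∑ y ∈ t, w y * ∏ j ∈ S, y j)
    (k : U → R) :
    ∑ x ∈ s with U.restrict x = k, v x = ∑ y ∈ t with U.restrict y = k, w y := by
  by_cases hk : ∀ j, k j = 0 ∨ k j = 1
  · set z : ι → R := fun j => if h : j ∈ U then k ⟨j, h⟩ else 0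
    have hz : ∀ j ∈ U, z j = 0 ∨ z j = 1 := fun j hj => by simpa [z, hj] using hk ⟨j, hj⟩
    have hrestrict (x : ι → R) : U.restrict x = k ↔ ∀ j ∈ U, x j = z j := by
      simp +contextual [funext_iff, z]
    have hmarginal {u : Finset (ι → R)} (hu : ∀ x ∈ u, ∀ j ∈ U, x j = 0 ∨ x j = 1)
        (a : (ι → R) → R) : ∑ x ∈ u with U.restrict x = k, a x =
          ∑ x ∈ u, a x * patternIndicator U z x := by
      rw [sum_filter]
      refine sum_congr rfl fun x hx => ?_
      rw [patternIndicator_eq_ite (hu x hx) hz, mul_ite, mul_one, mul_zero]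
      exact if_congr (hrestrict x) rfl rfl
    rw [hmarginal hs, hmarginal ht, sum_mul_patternIndicator_eq_sum_powerset,
      sum_mul_patternIndicator_eq_sum_powerset]
    exact sum_congr rfl fun S hS => by rw [hvw S (mem_powerset.1 hS)]
  · have hempty {u : Finset (ι → R)} (hu : ∀ x ∈ u, ∀ j ∈ U, x j = 0 ∨ x j = 1)
        (a : (ι → R) → R) : ∑ x ∈ u with U.restrict x = k, a x = 0 := by
      refine sum_eq_zero fun x hx => absurd ?_ hk
      obtain ⟨hxu, rfl⟩ := mem_filter.1 hx
      exact fun j => hu x hxu j j.2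
    rw [hempty hs, hempty ht]

end Moments

section Coupling

variable {𝕜 α β κ : Type*} [Field 𝕜] [LinearOrder 𝕜] [IsStrictOrderedRing 𝕜] [DecidableEq κ]

theorem exists_coupling_of_marginals_eq {s : Finset α} {t : Finset β} {f : α → κ} {g : β → κ}
    {v : α → 𝕜} {w : β → 𝕜} (hv : ∀ x ∈ s, 0 ≤ v x) (hw : ∀ y ∈ t, 0 ≤ w y)
    (hvw : ∀ k, ∑ x ∈ s with f x = k, v x = ∑ y ∈ t with g y = k, w y) :
    ∃ c : α × β → 𝕜, (∀ q ∈ s ×ˢ t, 0 ≤ c q) ∧ (∀ q, c q ≠ 0 → f q.1 = g q.2) ∧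
      (∀ x ∈ s, ∑ y ∈ t, c (x, y) = v x) ∧ (∀ y ∈ t, ∑ x ∈ s, c (x, y) = w y) := by
  set M : κ → 𝕜 := fun k => ∑ y ∈ t with g y = k, w y
  have hvM : ∀ x ∈ s, M (f x) = 0 → v x = 0 := fun x hx h => by
    refine le_antisymm ?_ (hv x hx)
    calc v x ≤ ∑ x' ∈ s with f x' = f x, v x' :=
          single_le_sum (fun x' hx' => hv x' (mem_filter.1 hx').1) (mem_filter.2 ⟨hx, rfl⟩)
      _ = M (f x) := hvw (f x)
      _ = 0 := h
  have hwM : ∀ y ∈ t, M (g y) = 0 → w y = 0 := fun y hy h => by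
    refine le_antisymm ?_ (hw y hy)
    calc w y ≤ M (g y) :=
          single_le_sum (fun y' hy' => hw y' (mem_filter.1 hy').1) (mem_filter.2 ⟨hy, rfl⟩)
      _ = 0 := h
  refine ⟨fun q => if f q.1 = g q.2 then v q.1 * w q.2 / M (g q.2) else 0, ?_, ?_, ?_, ?_⟩
  · rintro ⟨x, y⟩ hq
    obtain ⟨hx, hy⟩ := mem_product.1 hq
    dsimp only
    split_ifs
    · exact div_nonneg (mul_nonneg (hv x hx) (hw y hy))
        (sum_nonneg fun y' hy' => hw y' (mem_filter.1 hy').1)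
    · exact le_rfl
  · intro q hq
    by_contra h
    simp [h] at hq
  · intro x hx
    calc ∑ y ∈ t, (if f x = g y then v x * w y / M (g y) else 0)
        = ∑ y ∈ t with g y = f x, v x / M (f x) * w y := by
          rw [sum_filter]
          refine sum_congr rfl fun y _ => ?_
          by_cases h : g y = f x
          · rw [if_pos h.symm, if_pos h, h, mul_div_right_comm]
          · rw [if_neg (Ne.symm h), if_neg h]
      _ = v x := by rw [← mul_sum, div_mul_cancel_of_imp (hvM x hx)]
  · intro y hy
    calc ∑ x ∈ s, (if f x = g y then v x * w y / M (g y) else 0)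
        = (∑ x ∈ s with f x = g y, v x) * w y / M (g y) := by
          rw [sum_filter, sum_mul, sum_div]
          exact sum_congr rfl fun x _ => by split_ifs <;> simp
      _ = w y := by rw [hvw, mul_comm, mul_div_cancel_of_imp (hwM y hy)]

variable {E F : Type*} [AddCommGroup E] [Module 𝕜 E] [AddCommGroup F] [Module 𝕜 F]

theorem mk_sum_smul_mem_convexHull_of_marginals_eq {s : Finset α} {t : Finset β}
    {f : α → κ} {g : β → κ} {v : α → 𝕜} {w : β → 𝕜} (hv : ∀ x ∈ s, 0 ≤ v x)
    (hw : ∀ y ∈ t, 0 ≤ w y) (hv₁ : ∑ x ∈ s, v x = 1)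
    (hvw : ∀ k, ∑ x ∈ s with f x = k, v x = ∑ y ∈ t with g y = k, w y) (a : α → E) (b : β → F) :
    (∑ x ∈ s, v x • a x, ∑ y ∈ t, w y • b y) ∈
      convexHull 𝕜 {z | ∃ x ∈ s, ∃ y ∈ t, f x = g y ∧ z = (a x, b y)} := by
  obtain ⟨c, hc₀, hc_supp, hrow, hcol⟩ := exists_coupling_of_marginals_eq hv hw hvw
  have hmass : ∑ q ∈ s ×ˢ t with f q.1 = g q.2, c q = 1 := by
    rw [sum_filter_of_ne fun q _ => hc_supp q, sum_product, sum_congr rfl hrow, hv₁]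
  have hbary : ∑ q ∈ s ×ˢ t with f q.1 = g q.2, c q • (a q.1, b q.2) =
      (∑ x ∈ s, v x • a x, ∑ y ∈ t, w y • b y) := by
    rw [sum_filter_of_ne fun q _ hq => hc_supp q (left_ne_zero_of_smul hq)]
    refine Prod.ext ?_ ?_
    · simp only [Prod.fst_sum, Prod.smul_fst, sum_product, ← sum_smul]
      exact sum_congr rfl fun x hx => by rw [hrow x hx]
    · simp only [Prod.snd_sum, Prod.smul_snd, sum_product_right, ← sum_smul]
      exact sum_congr rfl fun y hy => by rw [hcol y hy]
  rw [← hbary]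
  refine (convex_convexHull 𝕜 _).sum_mem (fun q hq => hc₀ q (mem_filter.1 hq).1) hmass
    fun q hq => subset_convexHull 𝕜 _ ?_
  obtain ⟨hq, hfg⟩ := mem_filter.1 hq
  exact ⟨q.1, (mem_product.1 hq).1, q.2, (mem_product.1 hq).2, hfg, rfl⟩

theorem exists_sum_smul_eq_of_mem_convexHull_image {s : Finset α} {a : α → E}
    (ha : Set.InjOn a s) {p : E} (hp : p ∈ convexHull 𝕜 (a '' s)) :
    ∃ v : α → 𝕜, (∀ x ∈ s, 0 ≤ v x) ∧ ∑ x ∈ s, v x = 1 ∧ ∑ x ∈ s, v x • a x = p := by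
  classical
  rw [← coe_image, mem_convexHull'] at hp
  obtain ⟨u, hu₀, hu₁, hup⟩ := hp
  refine ⟨u ∘ a, fun x hx => hu₀ _ (mem_image_of_mem a hx), ?_, ?_⟩
  · rwa [sum_image ha] at hu₁
  · rwa [sum_image ha] at hup

end Coupling

section Monomials

variable {ι : Type*}

def monomialVector {R : Type*} [CommMonoid R] (U : Finset ι) (x : ι → R) :
    {T : Finset ι // T ⊆ U} → R :=
  fun T => ∏ j ∈ T.1, x j

theorem monomialVector_eq_of_eqOn {R : Type*} [CommMonoid R] {U : Finset ι} {x y : ι → R}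
    (h : ∀ j ∈ U, x j = y j) : monomialVector U x = monomialVector U y :=
  funext fun T => prod_congr rfl fun j hj => h j (T.2 hj)

theorem convexHull_coupled_subset_s17 {𝕜 : Type*} [CommSemiring 𝕜] [PartialOrder 𝕜]
    {U : Finset ι} {A₁ A₂ : Set (ι → 𝕜)} :
    convexHull 𝕜 {p | ∃ x₁ ∈ A₁, ∃ x₂ ∈ A₂, (∀ j ∈ U, x₁ j = x₂ j) ∧
      p = ((x₁, monomialVector U x₁), (x₂, monomialVector U x₂))} ⊆
    {p | p.1 ∈ convexHull 𝕜 {q | ∃ x ∈ A₁, q = (x, monomialVector U x)} ∧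
      p.2 ∈ convexHull 𝕜 {q | ∃ x ∈ A₂, q = (x, monomialVector U x)} ∧ p.1.2 = p.2.2} := by
  refine convexHull_min ?_ ?_
  · rintro _ ⟨x₁, hx₁, x₂, hx₂, hx, rfl⟩
    exact ⟨subset_convexHull 𝕜 _ ⟨x₁, hx₁, rfl⟩, subset_convexHull 𝕜 _ ⟨x₂, hx₂, rfl⟩,
      monomialVector_eq_of_eqOn hx⟩
  · intro p hp q hq a b ha hb hab
    exact ⟨convex_convexHull 𝕜 _ hp.1 hq.1 ha hb hab,
      convex_convexHull 𝕜 _ hp.2.1 hq.2.1 ha hb hab, by simp [hp.2.2, hq.2.2]⟩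

theorem mk_mem_convexHull_of_monomialVector_eq {𝕜 : Type*} [Field 𝕜] [LinearOrder 𝕜]
    [IsStrictOrderedRing 𝕜] [DecidableEq ι] {U : Finset ι}
    {A₁ A₂ : Set (ι → 𝕜)} (hA₁ : A₁.Finite) (hA₂ : A₂.Finite)
    (hb₁ : ∀ x ∈ A₁, ∀ j ∈ U, x j = 0 ∨ x j = 1) (hb₂ : ∀ x ∈ A₂, ∀ j ∈ U, x j = 0 ∨ x j = 1)
    {p₁ p₂ : (ι → 𝕜) × ({T : Finset ι // T ⊆ U} → 𝕜)}
    (hp₁ : p₁ ∈ convexHull 𝕜 {q | ∃ x ∈ A₁, q = (x, monomialVector U x)})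
    (hp₂ : p₂ ∈ convexHull 𝕜 {q | ∃ x ∈ A₂, q = (x, monomialVector U x)})
    (hp : p₁.2 = p₂.2) :
    (p₁, p₂) ∈ convexHull 𝕜 {p | ∃ x₁ ∈ A₁, ∃ x₂ ∈ A₂, (∀ j ∈ U, x₁ j = x₂ j) ∧
      p = ((x₁, monomialVector U x₁), (x₂, monomialVector U x₂))} := by
  set lift : (ι → 𝕜) → (ι → 𝕜) × ({T : Finset ι // T ⊆ U} → 𝕜) :=
    fun x => (x, monomialVector U x)
  have hlift : ∀ {A : Set (ι → 𝕜)} (hA : A.Finite), {q | ∃ x ∈ A, q = lift x} =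
      lift '' hA.toFinset := fun hA => by ext; simp [eq_comm]
  have hinj : Function.Injective lift := fun _ _ h => congrArg Prod.fst h
  obtain ⟨v, hv₀, hv₁, rfl⟩ := exists_sum_smul_eq_of_mem_convexHull_image
    hinj.injOn (hlift hA₁ ▸ hp₁)
  obtain ⟨w, hw₀, -, rfl⟩ := exists_sum_smul_eq_of_mem_convexHull_image
    hinj.injOn (hlift hA₂ ▸ hp₂)
  have hmoments : ∀ S ⊆ U, ∑ x ∈ hA₁.toFinset, v x * ∏ j ∈ S, x j =
      ∑ y ∈ hA₂.toFinset, w y * ∏ j ∈ S, y j := fun S hS => by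
    simpa [lift, Prod.snd_sum, monomialVector] using congrFun hp ⟨S, hS⟩
  have hmarginals := sum_filter_restrict_eq_of_moments_eq
    (fun x hx => hb₁ x (hA₁.mem_toFinset.1 hx)) (fun y hy => hb₂ y (hA₂.mem_toFinset.1 hy))
    hmoments
  refine convexHull_mono ?_ (mk_sum_smul_mem_convexHull_of_marginals_eq hv₀ hw₀ hv₁
    hmarginals lift lift)
  rintro _ ⟨x₁, hx₁, x₂, hx₂, h, rfl⟩
  exact ⟨x₁, hA₁.mem_toFinset.1 hx₁, x₂, hA₂.mem_toFinset.1 hx₂,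
    fun j hj => congrFun h ⟨j, hj⟩, rfl⟩

end Monomials

/-- Lemma 2 of the paper for two blocks: imposing agreement of all monomials
over subsets of `U₀` on the convex hulls yields exactly the convex hull of the
coupled points agreeing on `U₀`; in particular the projection to the
`x`-coordinates is `conv {(x¹, x²) : xⁱ ∈ Aⁱ, x¹_j = x²_j ∀ j ∈ U₀}`. -/
theorem stmt17 {n : ℕ} (A1 A2 : Set (Fin n → ℝ)) (hA1 : A1.Finite) (hA2 : A2.Finite)
    (hb1 : ∀ x ∈ A1, ∀ j, x j = 0 ∨ x j = 1)
    (hb2 : ∀ x ∈ A2, ∀ j, x j = 0 ∨ x j = 1)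
    (U0 : Finset (Fin n)) :
    letI m : (Fin n → ℝ) → ({T : Finset (Fin n) // T ⊆ U0} → ℝ) :=
      fun x T => ∏ j ∈ T.1, x j
    letI XM1 : Set ((Fin n → ℝ) × ({T : Finset (Fin n) // T ⊆ U0} → ℝ)) :=
      {q | ∃ x ∈ A1, q = (x, m x)}
    letI XM2 : Set ((Fin n → ℝ) × ({T : Finset (Fin n) // T ⊆ U0} → ℝ)) :=
      {q | ∃ x ∈ A2, q = (x, m x)}
    letI C : Set (((Fin n → ℝ) × ({T : Finset (Fin n) // T ⊆ U0} → ℝ)) ×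
        ((Fin n → ℝ) × ({T : Finset (Fin n) // T ⊆ U0} → ℝ))) :=
      convexHull ℝ {p | ∃ x1 ∈ A1, ∃ x2 ∈ A2, (∀ j ∈ U0, x1 j = x2 j) ∧
        p = ((x1, m x1), (x2, m x2))}
    ({p : ((Fin n → ℝ) × ({T : Finset (Fin n) // T ⊆ U0} → ℝ)) ×
        ((Fin n → ℝ) × ({T : Finset (Fin n) // T ⊆ U0} → ℝ)) |
        p.1 ∈ convexHull ℝ XM1 ∧ p.2 ∈ convexHull ℝ XM2 ∧ p.1.2 = p.2.2} = C) ∧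
      (fun p : ((Fin n → ℝ) × ({T : Finset (Fin n) // T ⊆ U0} → ℝ)) ×
          ((Fin n → ℝ) × ({T : Finset (Fin n) // T ⊆ U0} → ℝ)) => (p.1.1, p.2.1)) '' C
        = convexHull ℝ {p : (Fin n → ℝ) × (Fin n → ℝ) |
            p.1 ∈ A1 ∧ p.2 ∈ A2 ∧ ∀ j ∈ U0, p.1 j = p.2 j} := by
  constructor
  · refine subset_antisymm (fun p hp => ?_) convexHull_coupled_subset_s17
    exact mk_mem_convexHull_of_monomialVector_eq hA1 hA2 (fun x hx j _ => hb1 x hx j)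
      (fun x hx j _ => hb2 x hx j) hp.1 hp.2.1 hp.2.2
  · rw [IsLinearMap.image_convexHull ⟨fun _ _ => rfl, fun _ _ => rfl⟩]
    congr 1
    ext ⟨x₁, x₂⟩
    simp
end

section
/- Let f : {0,1}^n → R ∪ {+∞} and g : {0,1}^n → R ∪ {+∞} with finite domains dom(f), dom(g) ⊆ {0,1}^n, and suppose dom(f) ∩ dom(g) ≠ ∅. Define the Lagrangian dual with vertex multipliers: for μ : {0,1}^n → R, L(μ) = min_{x} ( f(x) + μ_x ) + min_{x} ( g(x) − μ_x ), where minima are over dom(f) and dom(g) respectively. Then sup_μ L(μ) = min_{x ∈ dom(f) ∩ dom(g)} ( f(x) + g(x) ), i.e., zero duality gap holds, and the supremum is attained. -/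
/-!
Weak duality holds for every multiplier `μ`: evaluating both inner minima at a common point `x`
gives `L(μ) ≤ (f x + μ x) + (g x - μ x) = f x + g x`.
For the converse, let `c` be the primal optimum and take `μ x = c - f x` on `dom f` and
`μ x = g x` elsewhere. The first inner minimum is then the constant `c`; the second one is
`f x + g x - c ≥ 0` on `dom f ∩ dom g`, vanishes at a primal minimiser, and is `0` off `dom f`.
-/

namespace VertexLagrangian

variable {α : Type*} (Df Dg : Set α) (f g : α → ℝ)

noncomputable def dual (μ : α → ℝ) : ℝ :=
  sInf ((fun x => f x + μ x) '' Df) + sInf ((fun x => g x - μ x) '' Dg)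

noncomputable def optimalMultiplier (c : ℝ) (x : α) : ℝ :=
  open Classical in if x ∈ Df then c - f x else g x

variable {Df Dg f g}

theorem dual_le (hf : Df.Finite) (hg : Dg.Finite) (μ : α → ℝ) {x : α} (hxf : x ∈ Df)
    (hxg : x ∈ Dg) : dual Df Dg f g μ ≤ f x + g x := by
  have hfx : sInf ((fun x => f x + μ x) '' Df) ≤ f x + μ x :=
    csInf_le (hf.image _).bddBelow ⟨x, hxf, rfl⟩
  have hgx : sInf ((fun x => g x - μ x) '' Dg) ≤ g x - μ x :=
    csInf_le (hg.image _).bddBelow ⟨x, hxg, rfl⟩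
  unfold dual
  linarith

theorem isLeast_image_add_optimalMultiplier {c : ℝ} (hDf : Df.Nonempty) :
    IsLeast ((fun x => f x + optimalMultiplier Df f g c x) '' Df) c := by
  obtain ⟨x₀, hx₀⟩ := hDf
  refine ⟨⟨x₀, hx₀, by simp [optimalMultiplier, hx₀]⟩, ?_⟩
  rintro _ ⟨x, hx, rfl⟩
  simp [optimalMultiplier, hx]

theorem isLeast_image_sub_optimalMultiplier {c : ℝ}
    (hc : IsLeast ((fun x => f x + g x) '' (Df ∩ Dg)) c) :
    IsLeast ((fun x => g x - optimalMultiplier Df f g c x) '' Dg) 0 := by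
  obtain ⟨⟨x₀, ⟨hx₀f, hx₀g⟩, hx₀⟩, hc_le⟩ := hc
  refine ⟨⟨x₀, hx₀g, by simp [optimalMultiplier, hx₀f, ← hx₀]⟩, ?_⟩
  rintro _ ⟨x, hxg, rfl⟩
  by_cases hxf : x ∈ Df
  · have : c ≤ f x + g x := hc_le ⟨x, ⟨hxf, hxg⟩, rfl⟩
    simp only [optimalMultiplier, hxf, if_true]
    linarith
  · simp [optimalMultiplier, hxf]

theorem dual_optimalMultiplier {c : ℝ} (hc : IsLeast ((fun x => f x + g x) '' (Df ∩ Dg)) c) :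
    dual Df Dg f g (optimalMultiplier Df f g c) = c := by
  have hDf : Df.Nonempty := (Set.image_nonempty.mp ⟨c, hc.1⟩).mono Set.inter_subset_left
  rw [dual, (isLeast_image_add_optimalMultiplier hDf).csInf_eq,
    (isLeast_image_sub_optimalMultiplier hc).csInf_eq, add_zero]

end VertexLagrangian

/-- Abstract strong duality of the V-Lagrangian dual: with one multiplier per
vertex of `{0,1}^n`, the Lagrangian dual has zero duality gap and the supremum
is attained. -/
theorem stmt18 {n : ℕ} (Df Dg : Set (Fin n → Bool))
    (f g : (Fin n → Bool) → ℝ) (hne : (Df ∩ Dg).Nonempty) :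
    IsGreatest
      {v : ℝ | ∃ μ : (Fin n → Bool) → ℝ,
        v = sInf ((fun x => f x + μ x) '' Df) + sInf ((fun x => g x - μ x) '' Dg)}
      (sInf ((fun x => f x + g x) '' (Df ∩ Dg))) := by
  set c := sInf ((fun x => f x + g x) '' (Df ∩ Dg))
  have hfin : ((fun x => f x + g x) '' (Df ∩ Dg)).Finite := Set.toFinite _
  have hc : IsLeast ((fun x => f x + g x) '' (Df ∩ Dg)) c :=
    ⟨(hne.image _).csInf_mem hfin, fun _ hv => csInf_le hfin.bddBelow hv⟩
  refine ⟨⟨VertexLagrangian.optimalMultiplier Df f g c,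
    (VertexLagrangian.dual_optimalMultiplier hc).symm⟩, ?_⟩
  rintro _ ⟨μ, rfl⟩
  obtain ⟨x, ⟨hxf, hxg⟩, hx⟩ := hc.1
  exact hx ▸ VertexLagrangian.dual_le (Set.toFinite Df) (Set.toFinite Dg) μ hxf hxg
end

section
/- Suppose f, g : {0,1}^n → R are nonnegative functions and let φ ≥ max_x max(|f(x)|, |g(x)|). Let V ⊆ {0,1}^n, let p₁ = min_{x ∉ V} f(x), p₂ = min_{x ∉ V} g(x), and suppose there is v* ∈ V with f(v*) + g(v*) ≤ p₁ + p₂ and f(v*) + g(v*) ≤ f(v) + g(v) for all v ∈ V. If p₁ + p₂ > 0, define μ : {0,1}^n → R by μ_v = 0 for v ∉ V and μ_v = (−p₂ f(v) + p₁ g(v))/(p₁ + p₂) for v ∈ V. Then min_x (f(x) + μ_x) + min_x (g(x) − μ_x) = f(v*) + g(v*), i.e., μ is an optimal dual multiplier achieving zero gap, and every nonzero entry of μ is bounded in absolute value by 2φ. -/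
/-!
On `V` the multiplier splits `f + g` proportionally: `f + μ = p₁ (f + g) / (p₁ + p₂)` and
`g - μ = p₂ (f + g) / (p₁ + p₂)`, both minimised over `V` at `v*`. Off `V` we have `μ = 0`, and
`f ≥ p₁ ≥ p₁ (f v* + g v*) / (p₁ + p₂)` because `f v* + g v* ≤ p₁ + p₂`; similarly for `g`.
The two minima therefore add up to `f v* + g v*`. Each `μ v` is a convex combination of
`-f v` and `g v`, hence bounded by `φ`.
-/

open Set

section SparseMultiplier

variable {α : Type*} [DecidableEq α] (f g : α → ℝ) (V : Finset α) (p₁ p₂ : ℝ)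

noncomputable def sparseMultiplier (v : α) : ℝ :=
  if v ∈ V then (-p₂ * f v + p₁ * g v) / (p₁ + p₂) else 0

variable {f g V p₁ p₂}

theorem sparseMultiplier_of_mem {v : α} (hv : v ∈ V) :
    sparseMultiplier f g V p₁ p₂ v = (-p₂ * f v + p₁ * g v) / (p₁ + p₂) :=
  if_pos hv

theorem sparseMultiplier_of_notMem {v : α} (hv : v ∉ V) :
    sparseMultiplier f g V p₁ p₂ v = 0 :=
  if_neg hv

theorem sparseMultiplier_swap :
    sparseMultiplier g f V p₂ p₁ = -sparseMultiplier f g V p₁ p₂ := by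
  ext v
  by_cases hv : v ∈ V
  · simp only [sparseMultiplier_of_mem hv, Pi.neg_apply, add_comm p₂ p₁, ← neg_div]
    ring
  · simp [sparseMultiplier_of_notMem hv]

theorem add_sparseMultiplier_of_mem (hS : p₁ + p₂ ≠ 0) {v : α} (hv : v ∈ V) :
    f v + sparseMultiplier f g V p₁ p₂ v = p₁ * (f v + g v) / (p₁ + p₂) := by
  rw [sparseMultiplier_of_mem hv]
  field_simp
  ring

theorem abs_sparseMultiplier_le {φ : ℝ} (hp₁ : 0 ≤ p₁) (hp₂ : 0 ≤ p₂) {v : α}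
    (hf : |f v| ≤ φ) (hg : |g v| ≤ φ) : |sparseMultiplier f g V p₁ p₂ v| ≤ φ := by
  have hφ : 0 ≤ φ := (abs_nonneg _).trans hf
  by_cases hv : v ∈ V
  · rw [sparseMultiplier_of_mem hv, abs_div, abs_of_nonneg (add_nonneg hp₁ hp₂)]
    refine div_le_of_le_mul₀ (add_nonneg hp₁ hp₂) hφ ?_
    calc |-p₂ * f v + p₁ * g v| ≤ p₂ * |f v| + p₁ * |g v| := by
          simpa [abs_mul, abs_of_nonneg hp₁, abs_of_nonneg hp₂] using
            abs_add_le (-p₂ * f v) (p₁ * g v)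
      _ ≤ p₂ * φ + p₁ * φ := by gcongr
      _ = φ * (p₁ + p₂) := by ring
  · rwa [sparseMultiplier_of_notMem hv, abs_zero]

variable {v : α}

theorem isLeast_range_add_sparseMultiplier (hp₁ : 0 ≤ p₁) (hpos : 0 < p₁ + p₂)
    (hlb : ∀ x ∉ V, p₁ ≤ f x) (hv : v ∈ V) (hv_le : f v + g v ≤ p₁ + p₂)
    (hv_min : ∀ w ∈ V, f v + g v ≤ f w + g w) :
    IsLeast (range fun x => f x + sparseMultiplier f g V p₁ p₂ x)
      (p₁ * (f v + g v) / (p₁ + p₂)) := by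
  refine ⟨⟨v, add_sparseMultiplier_of_mem hpos.ne' hv⟩, ?_⟩
  rintro _ ⟨x, rfl⟩
  dsimp only
  by_cases hx : x ∈ V
  · rw [add_sparseMultiplier_of_mem hpos.ne' hx]
    gcongr p₁ * ?_ / _
    exact hv_min x hx
  · calc p₁ * (f v + g v) / (p₁ + p₂) ≤ p₁ := by
          rw [mul_div_assoc]
          exact mul_le_of_le_one_right hp₁ (div_le_one_of_le₀ hv_le hpos.le)
      _ ≤ f x + sparseMultiplier f g V p₁ p₂ x := by
          rw [sparseMultiplier_of_notMem hx, add_zero]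
          exact hlb x hx

theorem isLeast_range_sub_sparseMultiplier (hp₂ : 0 ≤ p₂) (hpos : 0 < p₁ + p₂)
    (hlb : ∀ x ∉ V, p₂ ≤ g x) (hv : v ∈ V) (hv_le : f v + g v ≤ p₁ + p₂)
    (hv_min : ∀ w ∈ V, f v + g v ≤ f w + g w) :
    IsLeast (range fun x => g x - sparseMultiplier f g V p₁ p₂ x)
      (p₂ * (f v + g v) / (p₁ + p₂)) := by
  have h := isLeast_range_add_sparseMultiplier (f := g) (g := f) (V := V) (p₂ := p₁) hp₂
    (by linarith) hlb hv (by linarith) (fun w hw => by linarith [hv_min w hw])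
  rw [sparseMultiplier_swap] at h
  simp only [Pi.neg_apply, ← sub_eq_add_neg] at h
  rwa [add_comm (g v), add_comm p₂] at h

end SparseMultiplier

theorem stmt19_general {n : ℕ} (f g : (Fin n → Bool) → ℝ) (φ : ℝ)
    (hf : ∀ x, 0 ≤ f x) (hg : ∀ x, 0 ≤ g x)
    (hφ : ∀ x, |f x| ≤ φ ∧ |g x| ≤ φ)
    (V : Finset (Fin n → Bool))
    (p1 p2 : ℝ)
    (hp1 : IsLeast (f '' {x | x ∉ V}) p1) (hp2 : IsLeast (g '' {x | x ∉ V}) p2)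
    (vstar : Fin n → Bool) (hv : vstar ∈ V)
    (hopt1 : f vstar + g vstar ≤ p1 + p2)
    (hopt2 : ∀ v ∈ V, f vstar + g vstar ≤ f v + g v)
    (hpos : 0 < p1 + p2) :
    letI μ : (Fin n → Bool) → ℝ :=
      fun v => if v ∈ V then (-p2 * f v + p1 * g v) / (p1 + p2) else 0
    (sInf (Set.range fun x => f x + μ x) + sInf (Set.range fun x => g x - μ x)
        = f vstar + g vstar) ∧
      ∀ v, μ v ≠ 0 → |μ v| ≤ 2 * φ := by
  show (sInf (range fun x => f x + sparseMultiplier f g V p1 p2 x) +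
      sInf (range fun x => g x - sparseMultiplier f g V p1 p2 x) = f vstar + g vstar) ∧
    ∀ v, sparseMultiplier f g V p1 p2 v ≠ 0 → |sparseMultiplier f g V p1 p2 v| ≤ 2 * φ
  have hp1_nonneg : 0 ≤ p1 := by obtain ⟨x, -, rfl⟩ := hp1.1; exact hf x
  have hp2_nonneg : 0 ≤ p2 := by obtain ⟨x, -, rfl⟩ := hp2.1; exact hg x
  have h₁ := isLeast_range_add_sparseMultiplier hp1_nonneg hpos
    (fun x hx => hp1.2 (mem_image_of_mem f hx)) hv hopt1 hopt2
  have h₂ := isLeast_range_sub_sparseMultiplier hp2_nonneg hpos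
    (fun x hx => hp2.2 (mem_image_of_mem g hx)) hv hopt1 hopt2
  refine ⟨?_, fun v _ => ?_⟩
  · rw [h₁.csInf_eq, h₂.csInf_eq, ← add_div, ← add_mul, mul_div_cancel_left₀ _ hpos.ne']
  · have hμ := abs_sparseMultiplier_le (V := V) hp1_nonneg hp2_nonneg (hφ v).1 (hφ v).2
    linarith [(abs_nonneg (f v)).trans (hφ v).1]

/-- The explicit sparse dual multiplier constructed from the SDA termination
condition is optimal for the V-Lagrangian dual, and its nonzero entries are
bounded by `2φ`. -/
theorem stmt19 {n : ℕ} (f g : (Fin n → Bool) → ℝ) (φ : ℝ)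
    (hf : ∀ x, 0 ≤ f x) (hg : ∀ x, 0 ≤ g x)
    (hφ : ∀ x, |f x| ≤ φ ∧ |g x| ≤ φ)
    (V : Finset (Fin n → Bool)) (hne : ∃ x, x ∉ V)
    (p1 p2 : ℝ)
    (hp1 : IsLeast (f '' {x | x ∉ V}) p1) (hp2 : IsLeast (g '' {x | x ∉ V}) p2)
    (vstar : Fin n → Bool) (hv : vstar ∈ V)
    (hopt1 : f vstar + g vstar ≤ p1 + p2)
    (hopt2 : ∀ v ∈ V, f vstar + g vstar ≤ f v + g v)
    (hpos : 0 < p1 + p2) :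
    letI μ : (Fin n → Bool) → ℝ :=
      fun v => if v ∈ V then (-p2 * f v + p1 * g v) / (p1 + p2) else 0
    (sInf (Set.range fun x => f x + μ x) + sInf (Set.range fun x => g x - μ x)
        = f vstar + g vstar) ∧
      ∀ v, μ v ≠ 0 → |μ v| ≤ 2 * φ :=
  stmt19_general f g φ hf hg hφ V p1 p2 hp1 hp2 vstar hv hopt1 hopt2 hpos
end
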